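/- arXiv:2105.09424 — 7 statements merged into one kernel-verified Lean document; each statement's English description precedes it below -/
import Mathlib

section
/- Let Λ, Λ̂, b, β, β̂, μ, μ̂, ρ₀, ρ₁ be positive real constants and set α := min( μ̂/(bβ), (μ+ρ₀+ρ₁)/(bβ̂) ). Then for all x₁, x₂, x₃, x₄ > 0 one has (1 − α/x₁)·(Λ − bβx₁x₄ − μx₁) + (1 − 1/x₂)·(bβx₁x₄ − (μ+ρ₀+ρ₁)x₂) + (1 − α/x₃)·(Λ̂ − bβ̂x₃x₂ − μ̂x₃) + (1 − 1/x₄)·(bβ̂x₃x₂ − μ̂x₄) ≤ Λ + Λ̂ + αμ + (μ+ρ₀+ρ₁) + αμ̂ + μ̂. (This is the uniform bound on the diffusion generator's action on the Lyapunov function used to prove global existence and positivity of solutions of the stochastic dengue model.) -/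
/-- Uniform bound on the diffusion generator's action on the Lyapunov function
used to prove global existence and positivity of solutions of the stochastic
dengue model. -/
theorem lyapunov_generator_bound
    (Λ Λ' b β β' μ μ' ρ₀ ρ₁ : ℝ)
    (hΛ : 0 < Λ) (hΛ' : 0 < Λ') (hb : 0 < b) (hβ : 0 < β) (hβ' : 0 < β')
    (hμ : 0 < μ) (hμ' : 0 < μ') (hρ₀ : 0 < ρ₀) (hρ₁ : 0 < ρ₁)
    (α : ℝ) (hα : α = min (μ' / (b * β)) ((μ + ρ₀ + ρ₁) / (b * β')))
    (x₁ x₂ x₃ x₄ : ℝ)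
    (hx₁ : 0 < x₁) (hx₂ : 0 < x₂) (hx₃ : 0 < x₃) (hx₄ : 0 < x₄) :
    (1 - α / x₁) * (Λ - b * β * x₁ * x₄ - μ * x₁)
      + (1 - 1 / x₂) * (b * β * x₁ * x₄ - (μ + ρ₀ + ρ₁) * x₂)
      + (1 - α / x₃) * (Λ' - b * β' * x₃ * x₂ - μ' * x₃)
      + (1 - 1 / x₄) * (b * β' * x₃ * x₂ - μ' * x₄)
      ≤ Λ + Λ' + α * μ + (μ + ρ₀ + ρ₁) + α * μ' + μ' := by
  have hbβ : 0 < b * β := mul_pos hb hβ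
  have hbβ' : 0 < b * β' := mul_pos hb hβ'
  have hα0 : 0 < α := by
    rw [hα]
    exact lt_min (div_pos hμ' hbβ)
      (div_pos (by linarith) hbβ')
  have h1 : α * (b * β) ≤ μ' := by
    have := min_le_left (μ' / (b * β)) ((μ + ρ₀ + ρ₁) / (b * β'))
    rw [← hα] at this
    calc α * (b * β) ≤ μ' / (b * β) * (b * β) := by nlinarith
    _ = μ' := by field_simp
  have h2 : α * (b * β') ≤ μ + ρ₀ + ρ₁ := by
    have := min_le_right (μ' / (b * β)) ((μ + ρ₀ + ρ₁) / (b * β'))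
    rw [← hα] at this
    calc α * (b * β') ≤ (μ + ρ₀ + ρ₁) / (b * β') * (b * β') := by nlinarith
    _ = μ + ρ₀ + ρ₁ := by field_simp
  have e : (1 - α / x₁) * (Λ - b * β * x₁ * x₄ - μ * x₁)
      + (1 - 1 / x₂) * (b * β * x₁ * x₄ - (μ + ρ₀ + ρ₁) * x₂)
      + (1 - α / x₃) * (Λ' - b * β' * x₃ * x₂ - μ' * x₃)
      + (1 - 1 / x₄) * (b * β' * x₃ * x₂ - μ' * x₄)
      = (Λ + Λ' + α * μ + (μ + ρ₀ + ρ₁) + α * μ' + μ')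
        - (μ * x₁ + α * Λ / x₁ + ((μ + ρ₀ + ρ₁) - α * (b * β')) * x₂
          + b * β * x₁ * x₄ / x₂ + μ' * x₃ + α * Λ' / x₃
          + (μ' - α * (b * β)) * x₄ + b * β' * x₃ * x₂ / x₄) := by
    field_simp
    ring
  rw [e]
  have t1 : 0 ≤ α * Λ / x₁ := by positivity
  have t2 : 0 ≤ b * β * x₁ * x₄ / x₂ := by positivity
  have t3 : 0 ≤ α * Λ' / x₃ := by positivity
  have t4 : 0 ≤ b * β' * x₃ * x₂ / x₄ := by positivity
  have t5 : 0 ≤ ((μ + ρ₀ + ρ₁) - α * (b * β')) * x₂ :=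
    mul_nonneg (by linarith) hx₂.le
  have t6 : 0 ≤ (μ' - α * (b * β)) * x₄ :=
    mul_nonneg (by linarith) hx₄.le
  nlinarith [mul_pos hμ hx₁, mul_pos hμ' hx₃]
end

section
/- Let Λ, Λ̂, b, β, β̂, μ, μ̂, ρ₀, ρ₁ be positive real constants, let a ≥ 0, set m := μ+ρ₀+ρ₁ and R₀ := b²βΛβ̂Λ̂/(μ·m·μ̂²), and assume R₀ > 1. Define Î⋆ := μμ̂m(R₀−1)/( μ̂(μa+bβ)m + b²ββ̂Λ ), Ŝ⋆ := Λ̂/μ̂ − Î⋆, I⋆ := μ̂²Î⋆/( bβ̂(Λ̂ − μ̂Î⋆) ), and S⋆ := μ̂²m(1+aÎ⋆)/( b²ββ̂(Λ̂ − μ̂Î⋆) ). Then S⋆, I⋆, Ŝ⋆, Î⋆ are all strictly positive (in particular μ̂Î⋆ < Λ̂), and (S⋆, I⋆, Ŝ⋆, Î⋆) is an equilibrium of the deterministic dengue system, i.e. Λ − bβS⋆Î⋆/(1+aÎ⋆) − μS⋆ = 0, bβS⋆Î⋆/(1+aÎ⋆) − m·I⋆ = 0, Λ̂ − bβ̂Ŝ⋆I⋆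 − μ̂Ŝ⋆ = 0, and bβ̂Ŝ⋆I⋆ − μ̂Î⋆ = 0. -/
/-- For `R₀ > 1`, the endemic equilibrium of the deterministic dengue model is
positive and satisfies the equilibrium equations. -/
theorem endemic_equilibrium
    (Λ Λ' b β β' μ μ' ρ₀ ρ₁ a : ℝ)
    (hΛ : 0 < Λ) (hΛ' : 0 < Λ') (hb : 0 < b) (hβ : 0 < β) (hβ' : 0 < β')
    (hμ : 0 < μ) (hμ' : 0 < μ') (hρ₀ : 0 < ρ₀) (hρ₁ : 0 < ρ₁) (ha : 0 ≤ a)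
    (m R₀ Istar' Sstar' Istar Sstar : ℝ)
    (hm : m = μ + ρ₀ + ρ₁)
    (hR₀ : R₀ = b ^ 2 * β * Λ * β' * Λ' / (μ * m * μ' ^ 2))
    (hR₀gt : 1 < R₀)
    (hIstar' : Istar' = μ * μ' * m * (R₀ - 1) / (μ' * (μ * a + b * β) * m + b ^ 2 * β * β' * Λ))
    (hSstar' : Sstar' = Λ' / μ' - Istar')
    (hIstar : Istar = μ' ^ 2 * Istar' / (b * β' * (Λ' - μ' * Istar')))
    (hSstar : Sstar = μ' ^ 2 * m * (1 + a * Istar') / (b ^ 2 * β * β' * (Λ' - μ' * Istar'))) :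
    0 < Sstar ∧ 0 < Istar ∧ 0 < Sstar' ∧ 0 < Istar' ∧ μ' * Istar' < Λ' ∧
    Λ - b * β * Sstar * Istar' / (1 + a * Istar') - μ * Sstar = 0 ∧
    b * β * Sstar * Istar' / (1 + a * Istar') - m * Istar = 0 ∧
    Λ' - b * β' * Sstar' * Istar - μ' * Sstar' = 0 ∧
    b * β' * Sstar' * Istar - μ' * Istar' = 0 := by
  have hm0 : 0 < m := by rw [hm]; linarith
  have hD : 0 < μ' * (μ * a + b * β) * m + b ^ 2 * β * β' * Λ := by positivity
  have hR1 : 0 < R₀ - 1 := by linarith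
  have hI'pos : 0 < Istar' := by
    rw [hIstar']; exact div_pos (by positivity) hD
  -- key identity
  have hkey : Istar' * (μ' * (μ' * (μ * a + b * β) * m + b ^ 2 * β * β' * Λ)) =
      b ^ 2 * β * Λ * β' * Λ' - μ * m * μ' ^ 2 := by
    rw [hIstar', hR₀]
    field_simp
  have hE2 : (Λ' - μ' * Istar') * (μ' * (μ * a + b * β) * m + b ^ 2 * β * β' * Λ) =
      μ' * m * (Λ' * (μ * a + b * β) + μ * μ') := by
    linear_combination -hkey
  have hEpos : 0 < Λ' - μ' * Istar' := by
    have h : 0 < (Λ' - μ' * Istar') * (μ' * (μ * a + b * β) * m + b ^ 2 * β * β' * Λ) := by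
      rw [hE2]; positivity
    nlinarith [h, hD]
  have hIlt : μ' * Istar' < Λ' := by linarith
  have hS'pos : 0 < Sstar' := by
    rw [hSstar']
    rw [sub_pos, lt_div_iff₀ hμ']
    linarith [hIlt]
  have hIpos : 0 < Istar := by rw [hIstar]; positivity
  have h1a : 0 < 1 + a * Istar' := by positivity
  have hSpos : 0 < Sstar := by rw [hSstar]; positivity
  have hEne : Λ' - μ' * Istar' ≠ 0 := ne_of_gt hEpos
  have e2 : b * β * Sstar * Istar' / (1 + a * Istar') - m * Istar = 0 := by
    rw [hSstar, hIstar]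
    field_simp
    ring
  have e1 : Λ - m * Istar - μ * Sstar = 0 := by
    rw [hSstar, hIstar]
    field_simp
    linear_combination (-1 : ℝ) * hkey
  refine ⟨hSpos, hIpos, hS'pos, hI'pos, hIlt, by linarith, e2, ?_, ?_⟩
  · rw [hSstar', hIstar]
    field_simp
    ring
  · rw [hSstar', hIstar]
    field_simp
    ring
end

section
/- Let x, y > −1 and t ∈ [0, 1], and set z := t·x + (1−t)·y. Then ln(1+z) − z ≤ − [ ( (x∨y) − ln(1 + x∨y) )·𝟙{x∨y ≤ 0} + ( (x∧y) − ln(1 + x∧y) )·𝟙{x∧y > 0} ], where x∨y := max(x,y), x∧y := min(x,y), and 𝟙 denotes the indicator function (equal to 1 when the stated condition holds and 0 otherwise). -/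
lemma log_diff_le (a b : ℝ) (ha : -1 < a) (hb : -1 < b) :
    Real.log (1 + a) - Real.log (1 + b) ≤ (a - b) / (1 + b) := by
  have h1a : (0:ℝ) < 1 + a := by linarith
  have h1b : (0:ℝ) < 1 + b := by linarith
  have h := Real.log_le_sub_one_of_pos (div_pos h1a h1b)
  rw [Real.log_div h1a.ne' h1b.ne'] at h
  have : (1 + a) / (1 + b) - 1 = (a - b) / (1 + b) := by field_simp; ring
  linarith [this ▸ h]

lemma f_mono (a b : ℝ) (ha : -1 < a) (hb : -1 < b)
    (h : (a ≤ b ∧ b ≤ 0) ∨ (0 ≤ b ∧ b ≤ a)) :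
    Real.log (1 + a) - a ≤ Real.log (1 + b) - b := by
  have h1b : (0:ℝ) < 1 + b := by linarith
  have key := log_diff_le a b ha hb
  have : (a - b) / (1 + b) ≤ a - b := by
    rcases h with ⟨hab, hb0⟩ | ⟨hb0, hba⟩
    · rw [div_le_iff₀ h1b]; nlinarith
    · rw [div_le_iff₀ h1b]; nlinarith
  linarith

/-- For a convex combination `z` of `x, y > -1`,
`ln(1+z) - z` is bounded above by minus the indicator expression built from
`x ∨ y` and `x ∧ y`. -/
theorem log_convex_combination_bound
    (x y t : ℝ) (hx : -1 < x) (hy : -1 < y) (ht : t ∈ Set.Icc (0 : ℝ) 1) :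
    Real.log (1 + (t * x + (1 - t) * y)) - (t * x + (1 - t) * y)
      ≤ -((max x y - Real.log (1 + max x y)) * (if max x y ≤ 0 then 1 else 0)
          + (min x y - Real.log (1 + min x y)) * (if 0 < min x y then 1 else 0)) := by
  obtain ⟨ht0, ht1⟩ := ht
  set z := t * x + (1 - t) * y with hz
  have hmin : min x y ≤ z := by
    rcases le_total x y with h | h
    · simp only [min_eq_left h]; nlinarith
    · simp only [min_eq_right h]; nlinarith
  have hmax : z ≤ max x y := by
    rcases le_total x y with h | h
    · simp only [max_eq_right h]; nlinarith
    · simp only [max_eq_left h]; nlinarith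
  have hminlt : -1 < min x y := lt_min hx hy
  have hmaxlt : -1 < max x y := lt_of_lt_of_le hminlt (min_le_max)
  have hzlt : -1 < z := lt_of_lt_of_le hminlt hmin
  by_cases h1 : max x y ≤ 0
  · have h2 : ¬ (0 < min x y) := by
      push_neg; exact le_trans min_le_max h1
    simp only [if_pos h1, if_neg h2, mul_one, mul_zero, add_zero]
    have := f_mono z (max x y) hzlt hmaxlt (Or.inl ⟨hmax, h1⟩)
    linarith
  · by_cases h2 : 0 < min x y
    · simp only [if_neg h1, if_pos h2, mul_one, mul_zero, zero_add]
      have := f_mono z (min x y) hzlt hminlt (Or.inr ⟨le_of_lt h2, hmin⟩)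
      linarith
    · simp only [if_neg h1, if_neg h2, mul_zero, add_zero, neg_zero]
      have h1z : (0:ℝ) < 1 + z := by linarith
      have := Real.log_le_sub_one_of_pos h1z
      linarith
end

section
/- Let (U, 𝒜) be a measurable space equipped with a finite measure ν, let ξ₂, ξ₄ : U → ℝ be measurable functions satisfying ξᵢ(u) > −1 for all u ∈ U and such that u ↦ ξᵢ(u) − ln(1+ξᵢ(u)) is ν-integrable for i = 2, 4, and let t ∈ [0, 1]. Define b̲(u) := ( (ξ₂(u)∧ξ₄(u)) − ln(1 + ξ₂(u)∧ξ₄(u)) )·𝟙{ξ₂(u)∧ξ₄(u) > 0}, b̄(u) := ( (ξ₂(u)∨ξ₄(u)) − ln(1 + ξ₂(u)∨ξ₄(u)) )·𝟙{ξ₂(u)∨ξ₄(u) ≤ 0}, and 𝔅 := ∫_U ( b̄(u) + b̲(u) ) dν(u). Then ∫_U [ ln(1 + t·ξ₂(u) + (1−t)·ξ₄(u)) − ( t·ξ₂(u) + (1−t)·ξ₄(u) ) ] dν(u) ≤ −𝔅. -/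
open MeasureTheory

/-- `z - log(1+z) ≥ 0` for `z > -1`. -/
lemma aux_phi_nonneg {z : ℝ} (hz : -1 < z) : 0 ≤ z - Real.log (1 + z) := by
  have h : Real.log (1 + z) ≤ (1 + z) - 1 := Real.log_le_sub_one_of_pos (by linarith)
  linarith

/-- `z ↦ z - log(1+z)` is antitone on `(-1, 0]`. -/
lemma aux_phi_anti {a b : ℝ} (ha : -1 < a) (hab : a ≤ b) (hb : b ≤ 0) :
    b - Real.log (1 + b) ≤ a - Real.log (1 + a) := by
  have h1a : (0:ℝ) < 1 + a := by linarith
  have h1b : (0:ℝ) < 1 + b := by linarith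
  have h : Real.log ((1 + a) / (1 + b)) ≤ (1 + a) / (1 + b) - 1 :=
    Real.log_le_sub_one_of_pos (by positivity)
  rw [Real.log_div (by linarith) (by linarith)] at h
  rw [div_sub_one h1b.ne'] at h
  have h2 : (1 + a - (1 + b)) / (1 + b) ≤ a - b := by
    rw [div_le_iff₀ h1b]
    nlinarith
  linarith

/-- `z ↦ z - log(1+z)` is monotone on `[0, ∞)`. -/
lemma aux_phi_mono {a b : ℝ} (ha : 0 ≤ a) (hab : a ≤ b) :
    a - Real.log (1 + a) ≤ b - Real.log (1 + b) := by
  have h1a : (0:ℝ) < 1 + a := by linarith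
  have h1b : (0:ℝ) < 1 + b := by linarith
  have h : Real.log ((1 + b) / (1 + a)) ≤ (1 + b) / (1 + a) - 1 :=
    Real.log_le_sub_one_of_pos (by positivity)
  rw [Real.log_div (by linarith) (by linarith)] at h
  rw [div_sub_one h1a.ne'] at h
  have h2 : (1 + b - (1 + a)) / (1 + a) ≤ b - a := by
    rw [div_le_iff₀ h1a]
    nlinarith
  linarith

/-- Convexity of `z ↦ z - log(1+z)` on `(-1, ∞)`. -/
lemma aux_phi_convex {a b t : ℝ} (ha : -1 < a) (hb : -1 < b) (ht0 : 0 ≤ t) (ht1 : t ≤ 1) :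
    (t * a + (1 - t) * b) - Real.log (1 + (t * a + (1 - t) * b)) ≤
      t * (a - Real.log (1 + a)) + (1 - t) * (b - Real.log (1 + b)) := by
  obtain ⟨-, hcc⟩ := strictConcaveOn_log_Ioi.concaveOn
  have hc := hcc (x := 1 + a) (y := 1 + b)
    (by simpa using by linarith : (1 + a) ∈ Set.Ioi (0:ℝ))
    (by simpa using by linarith : (1 + b) ∈ Set.Ioi (0:ℝ))
    (a := t) (b := 1 - t) ht0 (by linarith) (by ring)
  simp only [smul_eq_mul] at hc
  have he : t * (1 + a) + (1 - t) * (1 + b) = 1 + (t * a + (1 - t) * b) := by ring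
  rw [he] at hc
  nlinarith

/-- A convex combination lies between the min and the max. -/
lemma aux_combo_mem {a b t : ℝ} (ht0 : 0 ≤ t) (ht1 : t ≤ 1) :
    min a b ≤ t * a + (1 - t) * b ∧ t * a + (1 - t) * b ≤ max a b := by
  constructor <;>
    nlinarith [min_le_left a b, min_le_right a b, le_max_left a b, le_max_right a b]

/-- Pointwise version of the jump bound. -/
lemma aux_pointwise_bound {a b t : ℝ} (ha : -1 < a) (hb : -1 < b) (ht0 : 0 ≤ t) (ht1 : t ≤ 1) :
    Real.log (1 + (t * a + (1 - t) * b)) - (t * a + (1 - t) * b) ≤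
      -((max a b - Real.log (1 + max a b)) * (if max a b ≤ 0 then 1 else 0)
        + (min a b - Real.log (1 + min a b)) * (if 0 < min a b then 1 else 0)) := by
  obtain ⟨h1, h2⟩ := aux_combo_mem (a := a) (b := b) ht0 ht1
  have hm : -1 < min a b := lt_min ha hb
  have hx : -1 < t * a + (1 - t) * b := lt_of_lt_of_le hm h1
  by_cases hmax : max a b ≤ 0
  · have hminnot : ¬ 0 < min a b := not_lt.2 ((min_le_max).trans hmax)
    rw [if_pos hmax, if_neg hminnot, mul_one, mul_zero, add_zero]
    have := aux_phi_anti hx h2 hmax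
    linarith
  · by_cases hmin : 0 < min a b
    · rw [if_neg hmax, if_pos hmin, mul_zero, mul_one, zero_add]
      have := aux_phi_mono hmin.le h1
      linarith
    · rw [if_neg hmax, if_neg hmin, mul_zero, mul_zero, add_zero, neg_zero]
      have := aux_phi_nonneg hx
      linarith

/-- Integral form of the jump bound: the integral of
`ln(1 + tξ₂ + (1-t)ξ₄) - (tξ₂ + (1-t)ξ₄)` against a finite measure is bounded
above by `-𝔅`. -/
theorem integral_log_jump_bound
    {U : Type*} [MeasurableSpace U] (ν : Measure U) [IsFiniteMeasure ν]
    (ξ₂ ξ₄ : U → ℝ) (hξ₂m : Measurable ξ₂) (hξ₄m : Measurable ξ₄)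
    (hξ₂ : ∀ u, -1 < ξ₂ u) (hξ₄ : ∀ u, -1 < ξ₄ u)
    (hint₂ : Integrable (fun u => ξ₂ u - Real.log (1 + ξ₂ u)) ν)
    (hint₄ : Integrable (fun u => ξ₄ u - Real.log (1 + ξ₄ u)) ν)
    (t : ℝ) (ht : t ∈ Set.Icc (0 : ℝ) 1) :
    ∫ u, (Real.log (1 + (t * ξ₂ u + (1 - t) * ξ₄ u)) - (t * ξ₂ u + (1 - t) * ξ₄ u)) ∂ν
      ≤ -(∫ u, ((max (ξ₂ u) (ξ₄ u) - Real.log (1 + max (ξ₂ u) (ξ₄ u)))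
                  * (if max (ξ₂ u) (ξ₄ u) ≤ 0 then 1 else 0)
                + (min (ξ₂ u) (ξ₄ u) - Real.log (1 + min (ξ₂ u) (ξ₄ u)))
                  * (if 0 < min (ξ₂ u) (ξ₄ u) then 1 else 0)) ∂ν) := by
  obtain ⟨ht0, ht1⟩ := ht
  set f : U → ℝ := fun u =>
    Real.log (1 + (t * ξ₂ u + (1 - t) * ξ₄ u)) - (t * ξ₂ u + (1 - t) * ξ₄ u) with hfdef
  set g : U → ℝ := fun u =>
    (max (ξ₂ u) (ξ₄ u) - Real.log (1 + max (ξ₂ u) (ξ₄ u)))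
        * (if max (ξ₂ u) (ξ₄ u) ≤ 0 then 1 else 0)
      + (min (ξ₂ u) (ξ₄ u) - Real.log (1 + min (ξ₂ u) (ξ₄ u)))
        * (if 0 < min (ξ₂ u) (ξ₄ u) then 1 else 0) with hgdef
  -- measurability
  have hxm : Measurable fun u => t * ξ₂ u + (1 - t) * ξ₄ u :=
    (hξ₂m.const_mul t).add (hξ₄m.const_mul (1 - t))
  have hfm : Measurable f := by
    apply Measurable.sub _ hxm
    exact Real.measurable_log.comp (measurable_const.add hxm)
  have hgm : Measurable g := by
    have hM : Measurable fun u => max (ξ₂ u) (ξ₄ u) := hξ₂m.max hξ₄m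
    have hm : Measurable fun u => min (ξ₂ u) (ξ₄ u) := hξ₂m.min hξ₄m
    apply Measurable.add
    · apply Measurable.mul
      · exact hM.sub (Real.measurable_log.comp (measurable_const.add hM))
      · exact Measurable.ite (measurableSet_le hM measurable_const)
          measurable_const measurable_const
    · apply Measurable.mul
      · exact hm.sub (Real.measurable_log.comp (measurable_const.add hm))
      · exact Measurable.ite (measurableSet_lt measurable_const hm)
          measurable_const measurable_const
  -- integrability of f
  have hbound : Integrable (fun u =>
      t * (ξ₂ u - Real.log (1 + ξ₂ u)) + (1 - t) * (ξ₄ u - Real.log (1 + ξ₄ u))) ν :=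
    (hint₂.const_mul t).add (hint₄.const_mul (1 - t))
  have hf_int : Integrable f ν := by
    refine hbound.mono hfm.aestronglyMeasurable (Filter.Eventually.of_forall fun u => ?_)
    have hconv := aux_phi_convex (hξ₂ u) (hξ₄ u) ht0 ht1
    have hm : -1 < min (ξ₂ u) (ξ₄ u) := lt_min (hξ₂ u) (hξ₄ u)
    have hx : -1 < t * ξ₂ u + (1 - t) * ξ₄ u :=
      lt_of_lt_of_le hm (aux_combo_mem ht0 ht1).1
    have h0 := aux_phi_nonneg hx
    have h2 := aux_phi_nonneg (hξ₂ u)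
    have h4 := aux_phi_nonneg (hξ₄ u)
    rw [Real.norm_eq_abs, Real.norm_eq_abs, abs_of_nonpos (by simp only [hfdef]; linarith),
      abs_of_nonneg (by nlinarith)]
    simp only [hfdef]
    linarith
  -- integrability of g
  have hg_int : Integrable g ν := by
    refine (hint₂.add hint₄).mono hgm.aestronglyMeasurable
      (Filter.Eventually.of_forall fun u => ?_)
    have hM : -1 < max (ξ₂ u) (ξ₄ u) := lt_of_lt_of_le (hξ₂ u) (le_max_left _ _)
    have hm : -1 < min (ξ₂ u) (ξ₄ u) := lt_min (hξ₂ u) (hξ₄ u)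
    have hφM := aux_phi_nonneg hM
    have hφm := aux_phi_nonneg hm
    have h2 := aux_phi_nonneg (hξ₂ u)
    have h4 := aux_phi_nonneg (hξ₄ u)
    have hiM : (0:ℝ) ≤ (if max (ξ₂ u) (ξ₄ u) ≤ 0 then (1:ℝ) else 0) ∧
        (if max (ξ₂ u) (ξ₄ u) ≤ 0 then (1:ℝ) else 0) ≤ 1 := by
      constructor <;> split <;> norm_num
    have him : (0:ℝ) ≤ (if 0 < min (ξ₂ u) (ξ₄ u) then (1:ℝ) else 0) ∧
        (if 0 < min (ξ₂ u) (ξ₄ u) then (1:ℝ) else 0) ≤ 1 := by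
      constructor <;> split <;> norm_num
    have hsum : (max (ξ₂ u) (ξ₄ u) - Real.log (1 + max (ξ₂ u) (ξ₄ u)))
        + (min (ξ₂ u) (ξ₄ u) - Real.log (1 + min (ξ₂ u) (ξ₄ u)))
        = (ξ₂ u - Real.log (1 + ξ₂ u)) + (ξ₄ u - Real.log (1 + ξ₄ u)) := by
      rcases le_total (ξ₂ u) (ξ₄ u) with h | h
      · rw [max_eq_right h, min_eq_left h]; ring
      · rw [max_eq_left h, min_eq_right h]
    simp only [Pi.add_apply, Real.norm_eq_abs]
    have hgnn : 0 ≤ g u := add_nonneg (mul_nonneg hφM hiM.1) (mul_nonneg hφm him.1)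
    rw [abs_of_nonneg hgnn, abs_of_nonneg (by linarith)]
    have hle1 : (max (ξ₂ u) (ξ₄ u) - Real.log (1 + max (ξ₂ u) (ξ₄ u)))
        * (if max (ξ₂ u) (ξ₄ u) ≤ 0 then (1:ℝ) else 0)
        ≤ max (ξ₂ u) (ξ₄ u) - Real.log (1 + max (ξ₂ u) (ξ₄ u)) := by
      nlinarith [hiM.1, hiM.2]
    have hle2 : (min (ξ₂ u) (ξ₄ u) - Real.log (1 + min (ξ₂ u) (ξ₄ u)))
        * (if 0 < min (ξ₂ u) (ξ₄ u) then (1:ℝ) else 0)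
        ≤ min (ξ₂ u) (ξ₄ u) - Real.log (1 + min (ξ₂ u) (ξ₄ u)) := by
      nlinarith [him.1, him.2]
    simp only [hgdef]
    linarith
  -- pointwise bound and conclusion
  have hfg : ∀ u, f u ≤ -g u := fun u =>
    aux_pointwise_bound (hξ₂ u) (hξ₄ u) ht0 ht1
  have key : ∫ u, f u ∂ν ≤ ∫ u, -g u ∂ν := integral_mono hf_int hg_int.neg hfg
  rwa [integral_neg] at key
end

section
/- Let Λ, Λ̂, b, β, β̂, μ, μ̂, ρ₀, ρ₁ be positive real constants, set ρ := ρ₀+ρ₁, R₀ := b²βΛβ̂Λ̂/(μ(μ+ρ)μ̂²), λ₁ := bβ̂Λ̂/(μ̂²(μ+ρ)), λ₂ := √R₀/μ̂, and 𝔇 := [ (μ+ρ)∨μ̂ ]·(√R₀ − 1)⁺ − [ (μ+ρ)∧μ̂ ]·(1 − √R₀)⁺. Then for all S, Ŝ, ψ, ψ̂, I, Î > 0 with S ≤ ψ and Ŝ ≤ ψ̂, one has [ λ₁·( bβSÎ − (μ+ρ)I ) + λ₂·( bβ̂ŜI − μ̂Î ) ] / ( λ₁I + λ₂Î ) ≤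 𝔇 + (λ₁bβ/λ₂)·(ψ − Λ/μ)⁺ + (λ₂bβ̂/λ₁)·(ψ̂ − Λ̂/μ̂)⁺, where x⁺ := max(x, 0). -/
/-- Key drift estimate in the proof of the exponential extinction theorem for
the stochastic dengue model. -/
theorem extinction_drift_estimate
    (Λ Λ' b β β' μ μ' ρ₀ ρ₁ : ℝ)
    (hΛ : 0 < Λ) (hΛ' : 0 < Λ') (hb : 0 < b) (hβ : 0 < β) (hβ' : 0 < β')
    (hμ : 0 < μ) (hμ' : 0 < μ') (hρ₀ : 0 < ρ₀) (hρ₁ : 0 < ρ₁)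
    (ρ R₀ l₁ l₂ D : ℝ)
    (hρ : ρ = ρ₀ + ρ₁)
    (hR₀ : R₀ = b ^ 2 * β * Λ * β' * Λ' / (μ * (μ + ρ) * μ' ^ 2))
    (hl₁ : l₁ = b * β' * Λ' / (μ' ^ 2 * (μ + ρ)))
    (hl₂ : l₂ = Real.sqrt R₀ / μ')
    (hD : D = max (μ + ρ) μ' * max (Real.sqrt R₀ - 1) 0
              - min (μ + ρ) μ' * max (1 - Real.sqrt R₀) 0)
    (S S' ψ ψ' I I' : ℝ)
    (hS : 0 < S) (hS' : 0 < S') (hψ : 0 < ψ) (hψ' : 0 < ψ')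
    (hI : 0 < I) (hI' : 0 < I')
    (hSψ : S ≤ ψ) (hS'ψ' : S' ≤ ψ') :
    (l₁ * (b * β * S * I' - (μ + ρ) * I) + l₂ * (b * β' * S' * I - μ' * I'))
        / (l₁ * I + l₂ * I')
      ≤ D + (l₁ * b * β / l₂) * max (ψ - Λ / μ) 0
          + (l₂ * b * β' / l₁) * max (ψ' - Λ' / μ') 0 := by
  have hμρ : 0 < μ + ρ := by rw [hρ]; positivity
  have hR : 0 < R₀ := by rw [hR₀]; positivity
  set s := Real.sqrt R₀ with hsdef
  have hs : 0 < s := Real.sqrt_pos.mpr hR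
  have hs2 : s ^ 2 = R₀ := Real.sq_sqrt hR.le
  have hl1 : 0 < l₁ := by rw [hl₁]; positivity
  have hl2 : 0 < l₂ := by rw [hl₂]; positivity
  have hden : 0 < l₁ * I + l₂ * I' := by positivity
  set P := max (ψ - Λ / μ) 0 with hPdef
  set Q := max (ψ' - Λ' / μ') 0 with hQdef
  have hP0 : 0 ≤ P := le_max_right _ _
  have hQ0 : 0 ≤ Q := le_max_right _ _
  have hSP : S ≤ Λ / μ + P := by
    have := le_max_left (ψ - Λ / μ) 0; simp only [← hPdef] at this; linarith
  have hSQ : S' ≤ Λ' / μ' + Q := by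
    have := le_max_left (ψ' - Λ' / μ') 0; simp only [← hQdef] at this; linarith
  have hA : l₁ * (b * β) * (Λ / μ) = s ^ 2 := by
    rw [hs2, hl₁, hR₀]; field_simp
  have hB : l₂ * μ' = s := by
    rw [hl₂]; field_simp
  have hC : l₂ * (b * β') * (Λ' / μ') = s * (l₁ * (μ + ρ)) := by
    rw [hl₂, hl₁]; field_simp
  have h1 : l₁ * (b * β) * S ≤ s ^ 2 + l₁ * (b * β) * P := by
    have h := mul_le_mul_of_nonneg_left hSP (by positivity : (0:ℝ) ≤ l₁ * (b * β))
    rw [mul_add, hA] at h; linarith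
  have h2 : l₂ * (b * β') * S' ≤ s * (l₁ * (μ + ρ)) + l₂ * (b * β') * Q := by
    have h := mul_le_mul_of_nonneg_left hSQ (by positivity : (0:ℝ) ≤ l₂ * (b * β'))
    rw [mul_add, hC] at h; linarith
  have hnum : l₁ * (b * β * S * I' - (μ + ρ) * I) + l₂ * (b * β' * S' * I - μ' * I')
      ≤ (s - 1) * (l₁ * (μ + ρ) * I + s * I')
        + l₁ * (b * β) * P * I' + l₂ * (b * β') * Q * I := by
    have e1 := mul_le_mul_of_nonneg_right h1 hI'.le
    have e2 := mul_le_mul_of_nonneg_right h2 hI.le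
    have e3 : l₂ * μ' * I' = s * I' := by rw [hB]
    linarith only [e1, e2, e3]
  have hDb : (s - 1) * (l₁ * (μ + ρ) * I + s * I') ≤ D * (l₁ * I + l₂ * I') := by
    rcases le_or_gt 1 s with h1s | h1s
    · have hmax : μ + ρ ≤ max (μ + ρ) μ' := le_max_left _ _
      have hmax' : μ' ≤ max (μ + ρ) μ' := le_max_right _ _
      have hD' : D = max (μ + ρ) μ' * (s - 1) := by
        rw [hD, max_eq_left (by linarith only [h1s] : s - 1 ≥ 0),
          max_eq_right (by linarith only [h1s] : 1 - s ≤ 0)]; ring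
      rw [hD']
      have t1 := mul_le_mul_of_nonneg_right hmax
        (by positivity : (0:ℝ) ≤ l₁ * I)
      have t2 := mul_le_mul_of_nonneg_right hmax'
        (by positivity : (0:ℝ) ≤ l₂ * I')
      have e3 : l₂ * μ' * I' = s * I' := by rw [hB]
      have a1 : l₁ * (μ + ρ) * I + s * I'
          ≤ max (μ + ρ) μ' * (l₁ * I + l₂ * I') := by
        linarith only [t1, t2, e3]
      have := mul_le_mul_of_nonneg_left a1
        (by linarith only [h1s] : (0:ℝ) ≤ s - 1)
      linarith only [this]
    · have hmin : min (μ + ρ) μ' ≤ μ + ρ := min_le_left _ _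
      have hmin' : min (μ + ρ) μ' ≤ μ' := min_le_right _ _
      have hD' : D = -(min (μ + ρ) μ' * (1 - s)) := by
        rw [hD, max_eq_right (by linarith only [h1s] : s - 1 ≤ 0),
          max_eq_left (by linarith only [h1s] : 1 - s ≥ 0)]; ring
      rw [hD']
      have t1 := mul_le_mul_of_nonneg_right hmin
        (by positivity : (0:ℝ) ≤ l₁ * I)
      have t2 := mul_le_mul_of_nonneg_right hmin'
        (by positivity : (0:ℝ) ≤ l₂ * I')
      have e3 : l₂ * μ' * I' = s * I' := by rw [hB]
      have a1 : min (μ + ρ) μ' * (l₁ * I + l₂ * I')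
          ≤ l₁ * (μ + ρ) * I + s * I' := by
        linarith only [t1, t2, e3]
      have := mul_le_mul_of_nonneg_left a1
        (by linarith only [h1s] : (0:ℝ) ≤ 1 - s)
      linarith only [this]
  have hsl1 : l₁ * (b * β) * P * I' ≤ (l₁ * b * β / l₂) * P * (l₁ * I + l₂ * I') := by
    have hpos : (0:ℝ) ≤ (l₁ * b * β / l₂) * P * (l₁ * I) := by positivity
    have heq : (l₁ * b * β / l₂) * P * (l₂ * I') = l₁ * (b * β) * P * I' := by
      field_simp
    linarith only [hpos, heq]
  have hsl2 : l₂ * (b * β') * Q * I ≤ (l₂ * b * β' / l₁) * Q * (l₁ * I + l₂ * I') := by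
    have hpos : (0:ℝ) ≤ (l₂ * b * β' / l₁) * Q * (l₂ * I') := by positivity
    have heq : (l₂ * b * β' / l₁) * Q * (l₁ * I) = l₂ * (b * β') * Q * I := by
      field_simp
    linarith only [hpos, heq]
  rw [div_le_iff₀ hden]
  have expand : (D + (l₁ * b * β / l₂) * P + (l₂ * b * β' / l₁) * Q) * (l₁ * I + l₂ * I')
      = D * (l₁ * I + l₂ * I') + (l₁ * b * β / l₂) * P * (l₁ * I + l₂ * I')
        + (l₂ * b * β' / l₁) * Q * (l₁ * I + l₂ * I') := by ring
  rw [expand]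
  linarith only [hnum, hDb, hsl1, hsl2]
end

section
/- Let f : [0, ∞) → ℝ be measurable with f and f² locally Lebesgue integrable, let c ∈ ℝ, and suppose that (1/t)·∫₀ᵗ f(s) ds → A and (1/t)·∫₀ᵗ f(s)² ds → B as t → ∞ for some real numbers A and B. Then B − 2cA + c² ≥ 0 and limsup_{t→∞} (1/t)·∫₀ᵗ (f(s) − c)⁺ ds ≤ (1/2)(A − c) + (1/2)·√(B − 2cA + c²), where x⁺ := max(x, 0). In particular, taking c = A, limsup_{t→∞} (1/t)·∫₀ᵗ (f(s) − A)⁺ ds ≤ (1/2)·√(B − A²). -/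
open MeasureTheory Filter

private lemma cesaro_posPart_aux
    (f : ℝ → ℝ)
    (hloc : ∀ t : ℝ, 0 < t → IntegrableOn f (Set.Icc 0 t))
    (hloc2 : ∀ t : ℝ, 0 < t → IntegrableOn (fun s => (f s) ^ 2) (Set.Icc 0 t))
    (c A B : ℝ)
    (hA : Tendsto (fun t : ℝ => (1 / t) * ∫ s in Set.Icc 0 t, f s) atTop (nhds A))
    (hB : Tendsto (fun t : ℝ => (1 / t) * ∫ s in Set.Icc 0 t, (f s) ^ 2) atTop (nhds B)) :
    0 ≤ B - 2 * c * A + c ^ 2 ∧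
    limsup (fun t : ℝ => (1 / t) * ∫ s in Set.Icc 0 t, max (f s - c) 0) atTop
      ≤ (1 / 2) * (A - c) + (1 / 2) * Real.sqrt (B - 2 * c * A + c ^ 2) := by
  set g : ℝ → ℝ := fun s => f s - c with hg_def
  -- basic facts for t > 0
  have hvol : ∀ t : ℝ, 0 < t → (volume (Set.Icc (0:ℝ) t)).toReal = t := by
    intro t ht
    rw [Real.volume_Icc, sub_zero, ENNReal.toReal_ofReal ht.le]
  have hfin : ∀ t : ℝ, 0 < t → IsFiniteMeasure (volume.restrict (Set.Icc (0:ℝ) t)) := by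
    intro t ht
    refine ⟨?_⟩
    rw [Measure.restrict_apply_univ, Real.volume_Icc]
    exact ENNReal.ofReal_lt_top
  have hg_int : ∀ t : ℝ, 0 < t → IntegrableOn g (Set.Icc 0 t) := by
    intro t ht
    haveI := hfin t ht
    exact (hloc t ht).sub (integrable_const c)
  have hg2_int : ∀ t : ℝ, 0 < t → IntegrableOn (fun s => g s ^ 2) (Set.Icc 0 t) := by
    intro t ht
    haveI := hfin t ht
    have h1 : IntegrableOn (fun s => f s ^ 2 - (2 * c) * f s + c ^ 2) (Set.Icc 0 t) :=
      ((hloc2 t ht).sub ((hloc t ht).const_mul (2 * c))).add (integrable_const (c ^ 2))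
    exact h1.congr (ae_of_all _ fun s => by simp only [hg_def]; ring)
  -- integral identities
  have hInt1 : ∀ t : ℝ, 0 < t →
      (∫ s in Set.Icc 0 t, g s) = (∫ s in Set.Icc 0 t, f s) - c * t := by
    intro t ht
    haveI := hfin t ht
    rw [integral_sub (hloc t ht) (integrable_const c), setIntegral_const, measureReal_def, hvol t ht,
      smul_eq_mul]
    ring
  have hInt2 : ∀ t : ℝ, 0 < t →
      (∫ s in Set.Icc 0 t, g s ^ 2)
        = (∫ s in Set.Icc 0 t, f s ^ 2) - 2 * c * (∫ s in Set.Icc 0 t, f s) + c ^ 2 * t := by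
    intro t ht
    haveI := hfin t ht
    have : (∫ s in Set.Icc 0 t, g s ^ 2)
        = ∫ s in Set.Icc 0 t, (f s ^ 2 - (2 * c) * f s + c ^ 2) := by
      refine integral_congr_ae (ae_of_all _ fun s => ?_)
      simp only [hg_def]; ring
    have h1 : IntegrableOn (fun s => f s ^ 2 - 2 * c * f s) (Set.Icc 0 t) :=
      (hloc2 t ht).sub ((hloc t ht).const_mul (2 * c))
    rw [this, integral_add h1 (integrable_const (c ^ 2)),
      integral_sub (hloc2 t ht) ((hloc t ht).const_mul (2 * c)),
      integral_const_mul, setIntegral_const, measureReal_def, hvol t ht, smul_eq_mul]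
    ring
  -- convergence of averages of g and g²
  have hg1_tendsto : Tendsto (fun t : ℝ => (1 / t) * ∫ s in Set.Icc 0 t, g s) atTop
      (nhds (A - c)) := by
    have h := hA.sub (tendsto_const_nhds (x := c))
    refine h.congr' ?_
    filter_upwards [eventually_gt_atTop (0:ℝ)] with t ht
    rw [hInt1 t ht]
    field_simp
    try ring
  have hg2_tendsto : Tendsto (fun t : ℝ => (1 / t) * ∫ s in Set.Icc 0 t, g s ^ 2) atTop
      (nhds (B - 2 * c * A + c ^ 2)) := by
    have h := (hB.sub (hA.const_mul (2 * c))).add (tendsto_const_nhds (x := c ^ 2))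
    refine h.congr' ?_
    filter_upwards [eventually_gt_atTop (0:ℝ)] with t ht
    rw [hInt2 t ht]
    field_simp
    try ring
  -- nonnegativity of the limit
  have hD : 0 ≤ B - 2 * c * A + c ^ 2 := by
    refine ge_of_tendsto hg2_tendsto ?_
    filter_upwards [eventually_gt_atTop (0:ℝ)] with t ht
    have : 0 ≤ ∫ s in Set.Icc 0 t, g s ^ 2 :=
      integral_nonneg fun s => sq_nonneg _
    positivity
  refine ⟨hD, ?_⟩
  -- Cauchy–Schwarz: (1/t) ∫ |g| ≤ sqrt ((1/t) ∫ g²) for t > 0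
  have hCS : ∀ t : ℝ, 0 < t →
      (1 / t) * (∫ s in Set.Icc 0 t, |g s|)
        ≤ Real.sqrt ((1 / t) * ∫ s in Set.Icc 0 t, g s ^ 2) := by
    intro t ht
    haveI := hfin t ht
    set μ := volume.restrict (Set.Icc (0:ℝ) t)
    have hconj : Real.HolderConjugate 2 2 := Real.holderConjugate_iff.mpr ⟨one_lt_two, by norm_num⟩
    have habs : MemLp (fun s => |g s|) (ENNReal.ofReal 2) μ := by
      rw [show ENNReal.ofReal 2 = 2 by norm_num]
      refine (memLp_two_iff_integrable_sq ((hg_int t ht).abs.aestronglyMeasurable)).2 ?_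
      refine (hg2_int t ht).congr (ae_of_all _ fun s => ?_)
      show g s ^ 2 = |g s| ^ 2
      rw [sq_abs]
    have hone : MemLp (fun _ : ℝ => (1:ℝ)) (ENNReal.ofReal 2) μ := memLp_const 1
    have h0 := integral_mul_le_Lp_mul_Lq_of_nonneg hconj
      (ae_of_all μ fun s => abs_nonneg (g s)) (ae_of_all μ fun _ => zero_le_one) habs hone
    have e1 : (∫ s, |g s| * 1 ∂μ) = ∫ s in Set.Icc 0 t, |g s| := by
      simp [μ]
    have e2 : (∫ s, |g s| ^ (2:ℝ) ∂μ) = ∫ s in Set.Icc 0 t, g s ^ 2 := by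
      refine integral_congr_ae (ae_of_all _ fun s => ?_)
      show |g s| ^ (2:ℝ) = g s ^ 2
      rw [Real.rpow_two, sq_abs]
    have e3 : (∫ _ : ℝ, (1:ℝ) ^ (2:ℝ) ∂μ) = t := by
      simp only [Real.one_rpow]
      rw [integral_const, smul_eq_mul, mul_one, measureReal_restrict_apply_univ, measureReal_def, hvol t ht]
    rw [e1, e2, e3] at h0
    have hX : 0 ≤ ∫ s in Set.Icc 0 t, g s ^ 2 := integral_nonneg fun s => sq_nonneg _
    set X := ∫ s in Set.Icc 0 t, g s ^ 2
    set Y := ∫ s in Set.Icc 0 t, |g s|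
    have hY : 0 ≤ Y := integral_nonneg fun s => abs_nonneg _
    have h0' : Y ≤ Real.sqrt X * Real.sqrt t := by
      rwa [Real.sqrt_eq_rpow, Real.sqrt_eq_rpow]
    rw [Real.le_sqrt (by positivity) (mul_nonneg (by positivity) hX)]
    have hsX := Real.sq_sqrt hX
    have hst := Real.sq_sqrt ht.le
    have h2 : Y ^ 2 ≤ X * t := by
      nlinarith [Real.sqrt_nonneg X, Real.sqrt_nonneg t]
    rw [div_mul_eq_mul_div, div_pow, one_mul]
    rw [div_mul_eq_mul_div, one_mul, div_le_div_iff₀ (by positivity) ht]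
    nlinarith
  -- pointwise/averaged bound
  have hle : ∀ᶠ t : ℝ in atTop,
      (1 / t) * (∫ s in Set.Icc 0 t, max (f s - c) 0)
        ≤ (1 / 2) * ((1 / t) * ∫ s in Set.Icc 0 t, g s)
          + (1 / 2) * Real.sqrt ((1 / t) * ∫ s in Set.Icc 0 t, g s ^ 2) := by
    filter_upwards [eventually_gt_atTop (0:ℝ)] with t ht
    have hInt : (∫ s in Set.Icc 0 t, max (f s - c) 0)
        = (1 / 2) * (∫ s in Set.Icc 0 t, g s) + (1 / 2) * (∫ s in Set.Icc 0 t, |g s|) := by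
      have : (∫ s in Set.Icc 0 t, max (f s - c) 0)
          = ∫ s in Set.Icc 0 t, ((1:ℝ) / 2 * g s + 1 / 2 * |g s|) := by
        refine integral_congr_ae (ae_of_all _ fun s => ?_)
        show max (f s - c) 0 = 1 / 2 * (f s - c) + 1 / 2 * |f s - c|
        rcases le_total (f s - c) 0 with h | h
        · rw [abs_of_nonpos h, max_eq_right h]; ring
        · rw [abs_of_nonneg h, max_eq_left h]; ring
      rw [this, integral_add ((hg_int t ht).const_mul _) ((hg_int t ht).abs.const_mul _),
        integral_const_mul, integral_const_mul]
    rw [hInt]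
    have := hCS t ht
    have h1t : 0 ≤ 1 / t := by positivity
    calc (1 / t) * ((1 / 2) * (∫ s in Set.Icc 0 t, g s)
              + (1 / 2) * (∫ s in Set.Icc 0 t, |g s|))
        = (1 / 2) * ((1 / t) * ∫ s in Set.Icc 0 t, g s)
            + (1 / 2) * ((1 / t) * (∫ s in Set.Icc 0 t, |g s|)) := by ring
      _ ≤ (1 / 2) * ((1 / t) * ∫ s in Set.Icc 0 t, g s)
            + (1 / 2) * Real.sqrt ((1 / t) * ∫ s in Set.Icc 0 t, g s ^ 2) := by linarith
  -- conclude via limsup comparison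
  have hφ : Tendsto (fun t : ℝ =>
      (1 / 2) * ((1 / t) * ∫ s in Set.Icc 0 t, g s)
        + (1 / 2) * Real.sqrt ((1 / t) * ∫ s in Set.Icc 0 t, g s ^ 2)) atTop
      (nhds ((1 / 2) * (A - c) + (1 / 2) * Real.sqrt (B - 2 * c * A + c ^ 2))) :=
    (hg1_tendsto.const_mul _).add (hg2_tendsto.sqrt.const_mul _)
  have hcobdd : IsCoboundedUnder (· ≤ ·) atTop
      (fun t : ℝ => (1 / t) * ∫ s in Set.Icc 0 t, max (f s - c) 0) := by
    refine isCoboundedUnder_le_of_eventually_le (x := 0) atTop ?_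
    filter_upwards [eventually_gt_atTop (0:ℝ)] with t ht
    have : 0 ≤ ∫ s in Set.Icc 0 t, max (f s - c) 0 :=
      integral_nonneg fun s => le_max_right _ _
    positivity
  calc limsup (fun t : ℝ => (1 / t) * ∫ s in Set.Icc 0 t, max (f s - c) 0) atTop
      ≤ limsup (fun t : ℝ =>
          (1 / 2) * ((1 / t) * ∫ s in Set.Icc 0 t, g s)
            + (1 / 2) * Real.sqrt ((1 / t) * ∫ s in Set.Icc 0 t, g s ^ 2)) atTop :=
        limsup_le_limsup hle hcobdd hφ.isBoundedUnder_le
    _ = (1 / 2) * (A - c) + (1 / 2) * Real.sqrt (B - 2 * c * A + c ^ 2) := hφ.limsup_eq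

/-- If the Cesàro averages of `f` and `f²` converge to `A` and `B`, then
`B - 2cA + c² ≥ 0` and the long-run time average of `(f - c)⁺` is bounded by
`(A - c)/2 + √(B - 2cA + c²)/2`; in particular with `c = A` it is bounded by
`√(B - A²)/2`. -/
theorem limsup_time_average_posPart_bound
    (f : ℝ → ℝ) (hf : Measurable f)
    (hloc : ∀ t : ℝ, 0 < t → IntegrableOn f (Set.Icc 0 t))
    (hloc2 : ∀ t : ℝ, 0 < t → IntegrableOn (fun s => (f s) ^ 2) (Set.Icc 0 t))
    (c A B : ℝ)
    (hA : Tendsto (fun t : ℝ => (1 / t) * ∫ s in Set.Icc 0 t, f s) atTop (nhds A))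
    (hB : Tendsto (fun t : ℝ => (1 / t) * ∫ s in Set.Icc 0 t, (f s) ^ 2) atTop (nhds B)) :
    0 ≤ B - 2 * c * A + c ^ 2 ∧
    limsup (fun t : ℝ => (1 / t) * ∫ s in Set.Icc 0 t, max (f s - c) 0) atTop
      ≤ (1 / 2) * (A - c) + (1 / 2) * Real.sqrt (B - 2 * c * A + c ^ 2) ∧
    limsup (fun t : ℝ => (1 / t) * ∫ s in Set.Icc 0 t, max (f s - A) 0) atTop
      ≤ (1 / 2) * Real.sqrt (B - A ^ 2) := by
  obtain ⟨h1, h2⟩ := cesaro_posPart_aux f hloc hloc2 c A B hA hB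
  obtain ⟨_, h3⟩ := cesaro_posPart_aux f hloc hloc2 A A B hA hB
  have hrw : B - 2 * A * A + A ^ 2 = B - A ^ 2 := by ring
  rw [hrw] at h3
  refine ⟨h1, h2, ?_⟩
  calc limsup (fun t : ℝ => (1 / t) * ∫ s in Set.Icc 0 t, max (f s - A) 0) atTop
      ≤ (1 / 2) * (A - A) + (1 / 2) * Real.sqrt (B - A ^ 2) := h3
    _ = (1 / 2) * Real.sqrt (B - A ^ 2) := by ring
end

section
/- Let b, β, β̂, Λ, Λ̂ and M₁, M₂, M₃, M₄ be positive real constants. Define θ₁ := b²ββ̂ΛΛ̂/(M₁²M₃M₄), θ₃ := b²ββ̂ΛΛ̂/(M₁M₃²M₄), θ₄ := b²ββ̂ΛΛ̂/(M₁M₃M₄²), and R̃₀ := b²ββ̂ΛΛ̂/(M₁M₂M₃M₄). Then for all x₁, x₂, x₃, x₄ > 0 one has −θ₁·Λ/x₁ − bβ·x₁x₄/x₂ − θ₃·Λ̂/x₃ − θ₄·bβ̂·x₃x₂/x₄ + θ₁bβ·x₄ + θ₃bβ̂·x₂ + θ₁M₁ + M₂ + θ₃M₃ + θ₄M₄ ≤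 b·(θ₁β·x₄ + θ₃β̂·x₂) − M₂·(R̃₀ − 1). -/
lemma amgm4' (a b c d K : ℝ) (ha : 0 < a) (hb : 0 < b) (hc : 0 < c) (hd : 0 < d)
    (hK : 0 < K) (h : a * b * c * d = K ^ 4) : 4 * K ≤ a + b + c + d := by
  have h1 : 4 * (a * b) ≤ (a + b) ^ 2 := by nlinarith [sq_nonneg (a - b)]
  have h2 : 4 * (c * d) ≤ (c + d) ^ 2 := by nlinarith [sq_nonneg (c - d)]
  have hsq : (4 * K ^ 2) ^ 2 ≤ ((a + b) * (c + d)) ^ 2 := by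
    have := mul_le_mul h1 h2 (by positivity) (by positivity)
    nlinarith [this]
  have hpq : 4 * K ^ 2 ≤ (a + b) * (c + d) := by
    nlinarith [hsq, mul_pos (add_pos ha hb) (add_pos hc hd), mul_pos hK hK]
  nlinarith [sq_nonneg (a + b - c - d), sq_nonneg (a + b + c + d - 4 * K),
    add_pos (add_pos ha hb) (add_pos hc hd), mul_pos hK hK]

/-- Key drift estimate in the proof that `R̃₀ > 1` implies persistence in the
mean for the stochastic dengue model. -/
theorem persistence_drift_estimate
    (b β β' Λ Λ' M₁ M₂ M₃ M₄ : ℝ)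
    (hb : 0 < b) (hβ : 0 < β) (hβ' : 0 < β') (hΛ : 0 < Λ) (hΛ' : 0 < Λ')
    (hM₁ : 0 < M₁) (hM₂ : 0 < M₂) (hM₃ : 0 < M₃) (hM₄ : 0 < M₄)
    (θ₁ θ₃ θ₄ R : ℝ)
    (hθ₁ : θ₁ = b ^ 2 * β * β' * Λ * Λ' / (M₁ ^ 2 * M₃ * M₄))
    (hθ₃ : θ₃ = b ^ 2 * β * β' * Λ * Λ' / (M₁ * M₃ ^ 2 * M₄))
    (hθ₄ : θ₄ = b ^ 2 * β * β' * Λ * Λ' / (M₁ * M₃ * M₄ ^ 2))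
    (hR : R = b ^ 2 * β * β' * Λ * Λ' / (M₁ * M₂ * M₃ * M₄))
    (x₁ x₂ x₃ x₄ : ℝ) (hx₁ : 0 < x₁) (hx₂ : 0 < x₂) (hx₃ : 0 < x₃) (hx₄ : 0 < x₄) :
    -(θ₁ * Λ / x₁) - b * β * x₁ * x₄ / x₂ - θ₃ * Λ' / x₃ - θ₄ * (b * β' * x₃ * x₂ / x₄)
      + θ₁ * b * β * x₄ + θ₃ * b * β' * x₂ + θ₁ * M₁ + M₂ + θ₃ * M₃ + θ₄ * M₄
      ≤ b * (θ₁ * β * x₄ + θ₃ * β' * x₂) - M₂ * (R - 1) := by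
  set K : ℝ := b ^ 2 * β * β' * Λ * Λ' / (M₁ * M₃ * M₄) with hK
  have hC : 0 < b ^ 2 * β * β' * Λ * Λ' := by positivity
  have hKpos : 0 < K := by positivity
  have hθ₁pos : 0 < θ₁ := by rw [hθ₁]; positivity
  have hθ₃pos : 0 < θ₃ := by rw [hθ₃]; positivity
  have hθ₄pos : 0 < θ₄ := by rw [hθ₄]; positivity
  have e1 : θ₁ * M₁ = K := by rw [hθ₁, hK]; field_simp
  have e3 : θ₃ * M₃ = K := by rw [hθ₃, hK]; field_simp
  have e4 : θ₄ * M₄ = K := by rw [hθ₄, hK]; field_simp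
  have eR : M₂ * R = K := by rw [hR, hK]; field_simp
  have hprod : (θ₁ * Λ / x₁) * (b * β * x₁ * x₄ / x₂) * (θ₃ * Λ' / x₃)
      * (θ₄ * (b * β' * x₃ * x₂ / x₄)) = K ^ 4 := by
    rw [hθ₁, hθ₃, hθ₄, hK]; field_simp
  have ha : 0 < θ₁ * Λ / x₁ := by positivity
  have hb2 : 0 < b * β * x₁ * x₄ / x₂ := by positivity
  have hc : 0 < θ₃ * Λ' / x₃ := by positivity
  have hd : 0 < θ₄ * (b * β' * x₃ * x₂ / x₄) := by positivity
  have := amgm4' _ _ _ _ K ha hb2 hc hd hKpos hprod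
  linarith
end
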